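/- Assume (A1), (A2) and (A3), and fix t ∈ {0,1}. Let λ† : 𝒳 → [ε, 1−ε] and π† : 𝒳 → [ε, 1−ε] be measurable, let τ† : 𝒳 → ℝ be bounded measurable, and set π̃(X) = λ†(X)·π_{t1} + (1−λ†(X))·π†(X). Suppose that either (i) τ†(X) = τ_t(X) almost surely, or (ii) both λ†(X) = λ₁(X) and π†(X) = π_t(0,X) almost surely. Then the influence-function expression for ν_t has mean zero: E[ 1{T=t}·λ†(X)·Y / (λ₁·π̃(X)) + ( R − 1{T=t}·λ†(X) / π̃(X) )·τ†(X)/λ₁ − (R/λ₁)·ν_t ] = 0. -/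

import Mathlib

open MeasureTheory ProbabilityTheory Set

noncomputable section

/-- The σ-algebra on `Ω` generated by the map `X`. -/
def sigmaX {Ω 𝒳 : Type*} [MeasurableSpace 𝒳] (X : Ω → 𝒳) : MeasurableSpace Ω :=
  MeasurableSpace.comap X inferInstance

/-- Conditional expectation of `f` given the σ-algebra `m'` under the measure `μ`. -/
def cexp {Ω : Type*} (m' : MeasurableSpace Ω) {m0 : MeasurableSpace Ω} (μ : Measure Ω)
    (f : Ω → ℝ) : Ω → ℝ :=
  MeasureTheory.condExp m' μ f

/-- Conditional probability of the event `s` given the σ-algebra `m'`, as a function. -/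
def cprob {Ω : Type*} (m' : MeasurableSpace Ω) {m0 : MeasurableSpace Ω} (μ : Measure Ω)
    (s : Set Ω) : Ω → ℝ :=
  cexp m' μ (s.indicator fun _ => (1 : ℝ))

/-- `f` and `g` are conditionally independent given the σ-algebra `m'` under `μ` :
conditional probabilities of joint events factorize. -/
def CondIndepFunGiven {Ω β γ : Type*} [MeasurableSpace β]
    [MeasurableSpace γ] (m' : MeasurableSpace Ω) {m0 : MeasurableSpace Ω}
    (f : Ω → β) (g : Ω → γ) (μ : Measure Ω) : Prop :=
  ∀ s u, MeasurableSet s → MeasurableSet u →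
    cprob m' μ (f ⁻¹' s ∩ g ⁻¹' u)
      =ᵐ[μ] fun ω => cprob m' μ (f ⁻¹' s) ω * cprob m' μ (g ⁻¹' u) ω

/-!
Write `W = Y_t - τ†(X)`, `g = λ†/π̃`, `c = π_{t1}`, `λ₁(X) = P(R = 1 | X)` and
`π₀(X) = P(T = t | R = 0, X)`. By consistency on `{T = t}` the score is
`(1{T=t} g(X) W - R W + R (Y_t - ν_t)) / λ₁`, and the last term has mean zero by definition of
`ν_t`, so everything reduces to the balance identity `E[1{T=t} g(X) W] = E[R W]`.

Splitting `{T = t}` according to `R`, (A1) turns the trial part into `c E[R g(X) W]` and (A2) the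
observational part into `E[(1 - R) π₀(X) g(X) W]`; (A3) then replaces `R` by `λ₁(X)` everywhere, so
`E[1{T=t} g(X) W] - E[R W] = E[((c λ₁ + (1 - λ₁) π₀) g - λ₁)(X) W]`. Under (i) `W` is orthogonal to
every bounded function of `X`; under (ii) the weight `(c λ₁ + (1 - λ₁) π₀) g - λ₁` vanishes.

The conditional independence in (A2) and (A3) of `f ∈ {R, T}` and `Z = (Y₁, Y₀)` given `X` is used
in the form `E[1{f ∈ s} | σ(X) ⊔ σ(Z)] = E[1{f ∈ s} | σ(X)]`, proved by a π-λ argument on the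
sets `C ∩ Z⁻¹ u` with `C ∈ σ(X)`.
-/

namespace MeasureTheory

variable {Ω : Type*} {m m0 : MeasurableSpace Ω} {μ : Measure Ω}

lemma sup_eq_generateFrom_image2_inter (m₁ m₂ : MeasurableSpace Ω) :
    m₁ ⊔ m₂ = MeasurableSpace.generateFrom
      (Set.image2 (· ∩ ·) {s | MeasurableSet[m₁] s} {s | MeasurableSet[m₂] s}) := by
  refine le_antisymm (sup_le ?_ ?_) (MeasurableSpace.generateFrom_le ?_)
  · intro s hs
    exact MeasurableSpace.measurableSet_generateFrom ⟨s, hs, univ, .univ, inter_univ s⟩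
  · intro s hs
    exact MeasurableSpace.measurableSet_generateFrom ⟨univ, .univ, s, hs, univ_inter s⟩
  · rintro _ ⟨s, hs, u, hu, rfl⟩
    exact (le_sup_left (b := m₂) s hs).inter (le_sup_right (a := m₁) u hu)

lemma isPiSystem_image2_inter_measurableSet (m₁ m₂ : MeasurableSpace Ω) :
    IsPiSystem (Set.image2 (· ∩ ·) {s | MeasurableSet[m₁] s} {s | MeasurableSet[m₂] s}) := by
  rintro _ ⟨s₁, hs₁, u₁, hu₁, rfl⟩ _ ⟨s₂, hs₂, u₂, hu₂, rfl⟩ -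
  exact ⟨s₁ ∩ s₂, hs₁.inter hs₂, u₁ ∩ u₂, hu₁.inter hu₂, inter_inter_inter_comm _ _ _ _⟩

lemma setIntegral_eq_of_isPiSystem (hm : m ≤ m0) {S : Set (Set Ω)}
    (h_eq : m = MeasurableSpace.generateFrom S) (hS : IsPiSystem S) (h_univ : univ ∈ S)
    {f g : Ω → ℝ} (hf : Integrable f μ) (hg : Integrable g μ)
    (basic : ∀ s ∈ S, ∫ ω in s, f ω ∂μ = ∫ ω in s, g ω ∂μ) {s : Set Ω}
    (hs : MeasurableSet[m] s) : ∫ ω in s, f ω ∂μ = ∫ ω in s, g ω ∂μ := by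
  have h_total : ∫ ω, f ω ∂μ = ∫ ω, g ω ∂μ := by
    simpa only [setIntegral_univ] using basic univ h_univ
  induction s, hs using MeasurableSpace.induction_on_inter h_eq hS with
  | empty => simp
  | basic s hs => exact basic s hs
  | compl s hs ih =>
    rw [← integral_add_compl (hm s hs) hf, ← integral_add_compl (hm s hs) hg] at h_total
    linarith
  | iUnion s hd hs ih =>
    rw [integral_iUnion (fun i => hm _ (hs i)) hd hf.integrableOn,
      integral_iUnion (fun i => hm _ (hs i)) hd hg.integrableOn]
    exact tsum_congr ih

lemma integral_mul_condExp_of_stronglyMeasurable (hm : m ≤ m0) [SigmaFinite (μ.trim hm)]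
    {H F : Ω → ℝ} (hH : StronglyMeasurable[m] H) (hHF : Integrable (H * F) μ)
    (hF : Integrable F μ) : ∫ ω, H ω * F ω ∂μ = ∫ ω, H ω * μ[F|m] ω ∂μ := by
  calc ∫ ω, H ω * F ω ∂μ = ∫ ω, μ[H * F|m] ω ∂μ := (integral_condExp hm).symm
    _ = ∫ ω, H ω * μ[F|m] ω ∂μ :=
      integral_congr_ae (condExp_mul_of_stronglyMeasurable_left hH hHF hF)

lemma integral_mul_sub_eq_zero_of_ae_eq_condExp (hm : m ≤ m0) [IsFiniteMeasure μ]
    {K Y Z : Ω → ℝ} (hK : StronglyMeasurable[m] K) {C : ℝ} (hKC : ∀ᵐ ω ∂μ, ‖K ω‖ ≤ C)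
    (hY : Integrable Y μ) (hZ : Z =ᵐ[μ] μ[Y|m]) :
    ∫ ω, K ω * (Y ω - Z ω) ∂μ = 0 := by
  have hKm : AEStronglyMeasurable K μ := (hK.mono hm).aestronglyMeasurable
  have hKY : Integrable (fun ω => K ω * Y ω) μ := hY.bdd_mul hKm hKC
  rw [integral_congr_ae (hZ.mono fun ω h => by rw [h, mul_sub]),
    integral_sub hKY (integrable_condExp.bdd_mul hKm hKC),
    integral_mul_condExp_of_stronglyMeasurable hm hK hKY hY, sub_self]

end MeasureTheory

namespace ProbabilityTheory

variable {Ω β γ : Type*} {m0 : MeasurableSpace Ω} [MeasurableSpace β] [mγ : MeasurableSpace γ]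
  {μ : Measure Ω} {A : Set Ω}

lemma measureReal_mul_integral_cond [IsFiniteMeasure μ] (F : Ω → ℝ) :
    μ.real A * ∫ ω, F ω ∂μ[|A] = ∫ ω in A, F ω ∂μ := by
  rw [cond, integral_smul_measure, ENNReal.toReal_inv, smul_eq_mul, ← mul_assoc, measureReal_def]
  rcases eq_or_ne (μ A) 0 with h | h
  · simp [Measure.restrict_eq_zero.mpr h]
  · rw [mul_inv_cancel₀ (ENNReal.toReal_ne_zero.mpr ⟨h, measure_ne_top μ A⟩), one_mul]

lemma setIntegral_sub_integral_cond [IsFiniteMeasure μ] {F : Ω → ℝ} (hF : Integrable F μ) :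
    ∫ ω in A, (F ω - ∫ ω', F ω' ∂μ[|A]) ∂μ = 0 := by
  rw [integral_sub hF.integrableOn (integrable_const _), setIntegral_const, smul_eq_mul,
    measureReal_mul_integral_cond, sub_self]

lemma toReal_cond_apply_mem_Icc (μ : Measure Ω) (A s : Set Ω) : (μ[|A] s).toReal ∈ Icc 0 1 :=
  ⟨ENNReal.toReal_nonneg, measureReal_le_one⟩

lemma _root_.MeasureTheory.Integrable.cond {F : Ω → ℝ} (hF : Integrable F μ) (A : Set Ω) :
    Integrable F μ[|A] := by
  rcases eq_or_ne (μ A) 0 with h | h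
  · rw [cond_eq_zero_of_meas_eq_zero h]
    exact integrable_zero_measure
  · exact hF.restrict.smul_measure (ENNReal.inv_ne_top.mpr h)

lemma IndepFun.setIntegral_inter_preimage [IsFiniteMeasure μ] {T : Ω → β} {V : Ω → γ}
    (hT : Measurable T) (hV : Measurable V) (hTV : IndepFun T V μ[|A]) {s : Set β}
    (hs : MeasurableSet s) {h : γ → ℝ} (hh : Measurable h) :
    ∫ ω in A ∩ T ⁻¹' s, h (V ω) ∂μ = (μ[|A] (T ⁻¹' s)).toReal * ∫ ω in A, h (V ω) ∂μ := by
  have hind := hTV.integral_comp_mul_comp (f := s.indicator 1) hT.aemeasurable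
    hV.aemeasurable (measurable_one.indicator hs).aestronglyMeasurable hh.aestronglyMeasurable
  have hTs : (s.indicator (1 : β → ℝ)) ∘ T = (T ⁻¹' s).indicator 1 := by
    ext ω; exact (Set.indicator_comp_right T).symm
  have hTsh : (s.indicator (1 : β → ℝ) ∘ T) * (h ∘ V) = (T ⁻¹' s).indicator (h ∘ V) := by
    rw [hTs]; ext ω; by_cases hω : ω ∈ T ⁻¹' s <;> simp [hω]
  rw [hTsh, hTs, integral_indicator_one (hT hs)] at hind
  calc ∫ ω in A ∩ T ⁻¹' s, h (V ω) ∂μ = ∫ ω in A, (T ⁻¹' s).indicator (h ∘ V) ω ∂μ :=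
        (setIntegral_indicator (hT hs)).symm
    _ = μ.real A * ((μ[|A] (T ⁻¹' s)).toReal * ∫ ω, h (V ω) ∂μ[|A]) := by
        rw [← measureReal_mul_integral_cond, hind]; rfl
    _ = (μ[|A] (T ⁻¹' s)).toReal * ∫ ω in A, h (V ω) ∂μ := by
        rw [← measureReal_mul_integral_cond]; ring

end ProbabilityTheory

section CondIndep

variable {Ω β γ : Type*} {m m0 : MeasurableSpace Ω} [MeasurableSpace β] [mγ : MeasurableSpace γ]
  {μ : Measure Ω} [IsFiniteMeasure μ] {f : Ω → β} {g : Ω → γ}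

lemma CondIndepFunGiven.setIntegral_cprob_inter_preimage (hm : m ≤ m0) (hf : Measurable f)
    (hg : Measurable g) (hfg : CondIndepFunGiven m f g μ) {s : Set β} (hs : MeasurableSet s)
    {C : Set Ω} (hC : MeasurableSet[m] C) {u : Set γ} (hu : MeasurableSet u) :
    ∫ ω in C ∩ g ⁻¹' u, cprob m μ (f ⁻¹' s) ω ∂μ
      = ∫ ω in C ∩ g ⁻¹' u, (f ⁻¹' s).indicator (fun _ => 1) ω ∂μ := by
  set A := f ⁻¹' s
  have hD : MeasurableSet (g ⁻¹' u) := hg hu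
  have hpull : μ[(g ⁻¹' u).indicator (cprob m μ A) | m]
      =ᵐ[μ] fun ω => cprob m μ A ω * cprob m μ (g ⁻¹' u) ω := by
    have h : (g ⁻¹' u).indicator (cprob m μ A) = cprob m μ A * (g ⁻¹' u).indicator 1 := by
      ext ω; by_cases hω : ω ∈ g ⁻¹' u <;> simp [hω]
    rw [h]
    exact condExp_mul_of_stronglyMeasurable_left stronglyMeasurable_condExp
      (h ▸ integrable_condExp.indicator hD) ((integrable_const 1).indicator hD)
  calc ∫ ω in C ∩ g ⁻¹' u, cprob m μ A ω ∂μ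
      = ∫ ω in C, μ[(g ⁻¹' u).indicator (cprob m μ A) | m] ω ∂μ := by
        rw [setIntegral_condExp hm (integrable_condExp.indicator hD) hC, setIntegral_indicator hD]
    _ = ∫ ω in C, cprob m μ (A ∩ g ⁻¹' u) ω ∂μ := by
        refine setIntegral_congr_ae (hm C hC) ?_
        filter_upwards [hpull, hfg s u hs hu] with ω h1 h2 _
        rw [h1, h2]
    _ = ∫ ω in C ∩ g ⁻¹' u, A.indicator (fun _ => 1) ω ∂μ := by
        rw [cprob, cexp,
          setIntegral_condExp hm ((integrable_const 1).indicator ((hf hs).inter hD)) hC,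
          ← setIntegral_indicator hD, Set.indicator_indicator, Set.inter_comm]

lemma CondIndepFunGiven.condExp_sup_comap_ae_eq (hm : m ≤ m0) (hf : Measurable f)
    (hg : Measurable g) (hfg : CondIndepFunGiven m f g μ) {s : Set β} (hs : MeasurableSet s) :
    μ[(f ⁻¹' s).indicator (fun _ => (1 : ℝ)) | m ⊔ mγ.comap g] =ᵐ[μ] cprob m μ (f ⁻¹' s) := by
  have hM : m ⊔ mγ.comap g ≤ m0 := sup_le hm hg.comap_le
  have hq : StronglyMeasurable[m ⊔ mγ.comap g] (cprob m μ (f ⁻¹' s)) :=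
    stronglyMeasurable_condExp.mono le_sup_left
  have hint : Integrable ((f ⁻¹' s).indicator fun _ => (1 : ℝ)) μ :=
    (integrable_const 1).indicator (hf hs)
  refine (ae_eq_condExp_of_forall_setIntegral_eq hM hint
    (fun _ _ _ => integrable_condExp.integrableOn) (fun S hS _ => ?_) hq.aestronglyMeasurable).symm
  refine setIntegral_eq_of_isPiSystem hM (sup_eq_generateFrom_image2_inter _ _)
    (isPiSystem_image2_inter_measurableSet _ _)
    ⟨univ, @MeasurableSet.univ _ m, univ, @MeasurableSet.univ _ (mγ.comap g), inter_univ _⟩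
    integrable_condExp hint ?_ hS
  rintro _ ⟨C, hC, _, ⟨u, hu, rfl⟩, rfl⟩
  exact hfg.setIntegral_cprob_inter_preimage hm hf hg hs hC hu

lemma CondIndepFunGiven.setIntegral_preimage (hm : m ≤ m0) (hf : Measurable f)
    (hg : Measurable g) (hfg : CondIndepFunGiven m f g μ) {s : Set β} (hs : MeasurableSet s)
    {H : Ω → ℝ} (hH : StronglyMeasurable[m ⊔ mγ.comap g] H) (hHi : Integrable H μ) :
    ∫ ω in f ⁻¹' s, H ω ∂μ = ∫ ω, cprob m μ (f ⁻¹' s) ω * H ω ∂μ := by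
  have hA : MeasurableSet (f ⁻¹' s) := hf hs
  have hAint : Integrable ((f ⁻¹' s).indicator fun _ => (1 : ℝ)) μ :=
    (integrable_const 1).indicator hA
  have hHA : H * (f ⁻¹' s).indicator (fun _ => 1) = (f ⁻¹' s).indicator H := by
    ext ω; by_cases h : ω ∈ f ⁻¹' s <;> simp [h]
  calc ∫ ω in f ⁻¹' s, H ω ∂μ = ∫ ω, H ω * (f ⁻¹' s).indicator (fun _ => 1) ω ∂μ := by
        rw [← integral_indicator hA, ← hHA]; rfl
    _ = ∫ ω, H ω * μ[(f ⁻¹' s).indicator (fun _ => 1) | m ⊔ mγ.comap g] ω ∂μ :=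
        integral_mul_condExp_of_stronglyMeasurable (sup_le hm hg.comap_le) hH
          (by rw [hHA]; exact hHi.indicator hA) hAint
    _ = ∫ ω, cprob m μ (f ⁻¹' s) ω * H ω ∂μ := by
        refine integral_congr_ae ?_
        filter_upwards [hfg.condExp_sup_comap_ae_eq hm hf hg hs] with ω h
        rw [h, mul_comm]

lemma CondIndepFunGiven.setIntegral_inter_preimage {A : Set Ω} (hm : m ≤ m0) (hf : Measurable f)
    (hg : Measurable g) (hfg : CondIndepFunGiven m f g μ[|A]) {s : Set β} (hs : MeasurableSet s)
    {H : Ω → ℝ} (hH : StronglyMeasurable[m ⊔ mγ.comap g] H) (hHi : Integrable H μ) :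
    ∫ ω in A ∩ f ⁻¹' s, H ω ∂μ = ∫ ω in A, cprob m μ[|A] (f ⁻¹' s) ω * H ω ∂μ := by
  rw [← setIntegral_indicator (hf hs), ← measureReal_mul_integral_cond,
    ← measureReal_mul_integral_cond, integral_indicator (hf hs),
    hfg.setIntegral_preimage hm hf hg hs hH (hHi.cond A)]

lemma cprob_compl_ae_eq (hm : m ≤ m0) {s : Set Ω} (hs : MeasurableSet s) :
    cprob m μ sᶜ =ᵐ[μ] fun ω => 1 - cprob m μ s ω := by
  have hint : Integrable (s.indicator fun _ => (1 : ℝ)) μ := (integrable_const 1).indicator hs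
  unfold cprob cexp
  rw [Set.indicator_compl]
  filter_upwards [condExp_sub (integrable_const 1) hint m] with ω h
  rw [h, Pi.sub_apply, condExp_const hm]

end CondIndep

lemma measurable_outcomes_covariates {Ω 𝒳 : Type*} [MeasurableSpace 𝒳] {X : Ω → 𝒳}
    {Y₁ Y₀ : Ω → ℝ} :
    Measurable[sigmaX X ⊔ MeasurableSpace.comap (fun ω => (Y₁ ω, Y₀ ω)) inferInstance]
      (fun ω => (Y₁ ω, Y₀ ω, X ω)) := by
  rw [sigmaX, ← MeasurableSpace.comap_prodMk]
  exact (measurable_snd.fst.prodMk (measurable_snd.snd.prodMk measurable_fst)).comp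
    (comap_measurable _)

lemma norm_le_one_of_mem_Icc {x : ℝ} (hx : x ∈ Icc 0 1) : ‖x‖ ≤ 1 := by
  rw [Real.norm_of_nonneg hx.1]; exact hx.2

section Trial

variable {Ω 𝒳 : Type*} [MeasurableSpace Ω] [MeasurableSpace 𝒳] {P : Measure Ω}
  [IsFiniteMeasure P] {X : Ω → 𝒳} {R T Y₁ Y₀ : Ω → ℝ} {t : ℝ} {w : ℝ × ℝ × 𝒳 → ℝ}

lemma setIntegral_treated_inter_trial_eq (hX : Measurable X) (hR : Measurable R)
    (hT : Measurable T) (hY₁ : Measurable Y₁) (hY₀ : Measurable Y₀)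
    (hA1 : IndepFun T (fun ω => (Y₁ ω, Y₀ ω, X ω)) P[|{ω | R ω = 1}])
    (hA3 : CondIndepFunGiven (sigmaX X) R (fun ω => (Y₁ ω, Y₀ ω)) P)
    (hw : Measurable w) (hwi : Integrable (fun ω => w (Y₁ ω, Y₀ ω, X ω)) P) :
    ∫ ω in {ω | T ω = t} ∩ {ω | R ω = 1}, w (Y₁ ω, Y₀ ω, X ω) ∂P
      = (P[|{ω | R ω = 1}] {ω | T ω = t}).toReal
        * ∫ ω, cprob (sigmaX X) P {ω | R ω = 1} ω * w (Y₁ ω, Y₀ ω, X ω) ∂P := by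
  rw [inter_comm]
  exact (hA1.setIntegral_inter_preimage hT (hY₁.prodMk (hY₀.prodMk hX))
    (measurableSet_singleton t) hw).trans
    (congrArg (_ * ·) (hA3.setIntegral_preimage hX.comap_le hR (hY₁.prodMk hY₀)
      (measurableSet_singleton 1) (hw.comp measurable_outcomes_covariates).stronglyMeasurable hwi))

lemma setIntegral_treated_diff_trial_eq (hX : Measurable X) (hR : Measurable R)
    (hT : Measurable T) (hY₁ : Measurable Y₁) (hY₀ : Measurable Y₀)
    (hRbin : ∀ ω, R ω = 0 ∨ R ω = 1)
    (hA2 : CondIndepFunGiven (sigmaX X) T (fun ω => (Y₁ ω, Y₀ ω)) P[|{ω | R ω = 0}])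
    (hA3 : CondIndepFunGiven (sigmaX X) R (fun ω => (Y₁ ω, Y₀ ω)) P)
    (hpi : ∀ᵐ ω ∂P, cprob (sigmaX X) P[|{ω | R ω = 0}] {ω | T ω = t} ω ∈ Icc 0 1)
    (hw : Measurable w) (hwi : Integrable (fun ω => w (Y₁ ω, Y₀ ω, X ω)) P) :
    ∫ ω in {ω | T ω = t} \ {ω | R ω = 1}, w (Y₁ ω, Y₀ ω, X ω) ∂P
      = ∫ ω, (1 - cprob (sigmaX X) P {ω | R ω = 1} ω)
          * (cprob (sigmaX X) P[|{ω | R ω = 0}] {ω | T ω = t} ω * w (Y₁ ω, Y₀ ω, X ω)) ∂P := by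
  set π₀ := cprob (sigmaX X) P[|{ω | R ω = 0}] {ω | T ω = t}
  set H := fun ω => w (Y₁ ω, Y₀ ω, X ω)
  have hm : sigmaX X ≤ ‹MeasurableSpace Ω› := hX.comap_le
  have hZ : Measurable fun ω => (Y₁ ω, Y₀ ω) := hY₁.prodMk hY₀
  have hH : StronglyMeasurable[sigmaX X ⊔ (inferInstance : MeasurableSpace (ℝ × ℝ)).comap
      (fun ω => (Y₁ ω, Y₀ ω))] H := (hw.comp measurable_outcomes_covariates).stronglyMeasurable
  have hπ₀ : StronglyMeasurable[sigmaX X ⊔ (inferInstance : MeasurableSpace (ℝ × ℝ)).comap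
      (fun ω => (Y₁ ω, Y₀ ω))] π₀ := stronglyMeasurable_condExp.mono le_sup_left
  have hπ₀H : Integrable (fun ω => π₀ ω * H ω) P :=
    hwi.bdd_mul (stronglyMeasurable_condExp.mono hm).aestronglyMeasurable
      (hpi.mono fun ω h => norm_le_one_of_mem_Icc h)
  have hR0 : {ω | R ω = 0} = R ⁻¹' {1}ᶜ := by
    ext ω; rcases hRbin ω with h | h <;> simp [h]
  have hdiff : {ω | T ω = t} \ {ω | R ω = 1} = {ω | R ω = 0} ∩ T ⁻¹' {t} := by
    rw [hR0, sdiff_eq, inter_comm]; rfl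
  calc ∫ ω in {ω | T ω = t} \ {ω | R ω = 1}, H ω ∂P
      = ∫ ω in {ω | R ω = 0}, π₀ ω * H ω ∂P := by
        rw [hdiff]; exact hA2.setIntegral_inter_preimage hm hT hZ (measurableSet_singleton t) hH hwi
    _ = ∫ ω in R ⁻¹' {1}ᶜ, π₀ ω * H ω ∂P := congrArg (fun S => ∫ ω in S, π₀ ω * H ω ∂P) hR0
    _ = ∫ ω, cprob (sigmaX X) P (R ⁻¹' {1})ᶜ ω * (π₀ ω * H ω) ∂P :=
        hA3.setIntegral_preimage hm hR hZ (measurableSet_singleton 1).compl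
          (hπ₀.mul hH) hπ₀H
    _ = ∫ ω, (1 - cprob (sigmaX X) P {ω | R ω = 1} ω) * (π₀ ω * H ω) ∂P := by
        refine integral_congr_ae ?_
        filter_upwards [cprob_compl_ae_eq hm (hR (measurableSet_singleton 1))] with ω h
        rw [h]; rfl

lemma setIntegral_treated_eq (hX : Measurable X) (hR : Measurable R) (hT : Measurable T)
    (hY₁ : Measurable Y₁) (hY₀ : Measurable Y₀) (hRbin : ∀ ω, R ω = 0 ∨ R ω = 1)
    (hA1 : IndepFun T (fun ω => (Y₁ ω, Y₀ ω, X ω)) P[|{ω | R ω = 1}])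
    (hA2 : CondIndepFunGiven (sigmaX X) T (fun ω => (Y₁ ω, Y₀ ω)) P[|{ω | R ω = 0}])
    (hA3 : CondIndepFunGiven (sigmaX X) R (fun ω => (Y₁ ω, Y₀ ω)) P)
    (hlam : ∀ᵐ ω ∂P, cprob (sigmaX X) P {ω | R ω = 1} ω ∈ Icc 0 1)
    (hpi : ∀ᵐ ω ∂P, cprob (sigmaX X) P[|{ω | R ω = 0}] {ω | T ω = t} ω ∈ Icc 0 1)
    (hw : Measurable w) (hwi : Integrable (fun ω => w (Y₁ ω, Y₀ ω, X ω)) P) :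
    ∫ ω in {ω | T ω = t}, w (Y₁ ω, Y₀ ω, X ω) ∂P
      = ∫ ω, ((P[|{ω | R ω = 1}] {ω | T ω = t}).toReal * cprob (sigmaX X) P {ω | R ω = 1} ω
          + (1 - cprob (sigmaX X) P {ω | R ω = 1} ω)
            * cprob (sigmaX X) P[|{ω | R ω = 0}] {ω | T ω = t} ω)
          * w (Y₁ ω, Y₀ ω, X ω) ∂P := by
  set lam := cprob (sigmaX X) P {ω | R ω = 1}
  set π₀ := cprob (sigmaX X) P[|{ω | R ω = 0}] {ω | T ω = t}
  set H := fun ω => w (Y₁ ω, Y₀ ω, X ω)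
  have hsm : ∀ {μ : Measure Ω} {s : Set Ω}, AEStronglyMeasurable (cprob (sigmaX X) μ s) P :=
    (stronglyMeasurable_condExp.mono hX.comap_le).aestronglyMeasurable
  have hlamH : Integrable (fun ω => lam ω * H ω) P :=
    hwi.bdd_mul hsm (hlam.mono fun ω h => norm_le_one_of_mem_Icc h)
  have hrest : Integrable (fun ω => (1 - lam ω) * (π₀ ω * H ω)) P :=
    (hwi.bdd_mul hsm (hpi.mono fun ω h => norm_le_one_of_mem_Icc h)).bdd_mul
      (aestronglyMeasurable_const.sub hsm)
      (hlam.mono fun ω h => norm_le_one_of_mem_Icc ⟨by linarith [h.2], by linarith [h.1]⟩)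
  have hR1 : MeasurableSet {ω | R ω = 1} := hR (measurableSet_singleton 1)
  rw [← integral_inter_add_sdiff hR1 hwi.integrableOn,
    setIntegral_treated_inter_trial_eq hX hR hT hY₁ hY₀ hA1 hA3 hw hwi,
    setIntegral_treated_diff_trial_eq hX hR hT hY₁ hY₀ hRbin hA2 hA3 hpi hw hwi,
    ← integral_const_mul, ← integral_add (hlamH.const_mul _) hrest]
  exact integral_congr_ae (ae_of_all _ fun ω => by ring)

lemma setIntegral_treated_weighted_eq (hX : Measurable X) (hR : Measurable R) (hT : Measurable T)
    (hY₁ : Measurable Y₁) (hY₀ : Measurable Y₀) (hRbin : ∀ ω, R ω = 0 ∨ R ω = 1)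
    (hA1 : IndepFun T (fun ω => (Y₁ ω, Y₀ ω, X ω)) P[|{ω | R ω = 1}])
    (hA2 : CondIndepFunGiven (sigmaX X) T (fun ω => (Y₁ ω, Y₀ ω)) P[|{ω | R ω = 0}])
    (hA3 : CondIndepFunGiven (sigmaX X) R (fun ω => (Y₁ ω, Y₀ ω)) P)
    (hlam : ∀ᵐ ω ∂P, cprob (sigmaX X) P {ω | R ω = 1} ω ∈ Icc 0 1)
    (hpi : ∀ᵐ ω ∂P, cprob (sigmaX X) P[|{ω | R ω = 0}] {ω | T ω = t} ω ∈ Icc 0 1)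
    {φ : ℝ × ℝ → ℝ} (hφ : Measurable φ) (hφi : Integrable (fun ω => φ (Y₁ ω, Y₀ ω)) P)
    {g τ : 𝒳 → ℝ} (hg : Measurable g) (hτ : Measurable τ) {B C : ℝ} (hgB : ∀ x, ‖g x‖ ≤ B)
    (hτC : ∀ x, ‖τ x‖ ≤ C)
    (hrob : (fun ω => τ (X ω)) =ᵐ[P] cexp (sigmaX X) P (fun ω => φ (Y₁ ω, Y₀ ω)) ∨
      (fun ω => ((P[|{ω | R ω = 1}] {ω | T ω = t}).toReal * cprob (sigmaX X) P {ω | R ω = 1} ω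
          + (1 - cprob (sigmaX X) P {ω | R ω = 1} ω)
            * cprob (sigmaX X) P[|{ω | R ω = 0}] {ω | T ω = t} ω) * g (X ω))
        =ᵐ[P] cprob (sigmaX X) P {ω | R ω = 1}) :
    ∫ ω in {ω | T ω = t}, g (X ω) * (φ (Y₁ ω, Y₀ ω) - τ (X ω)) ∂P
      = ∫ ω in {ω | R ω = 1}, (φ (Y₁ ω, Y₀ ω) - τ (X ω)) ∂P := by
  set c := (P[|{ω | R ω = 1}] {ω | T ω = t}).toReal
  set lam := cprob (sigmaX X) P {ω | R ω = 1}
  set π₀ := cprob (sigmaX X) P[|{ω | R ω = 0}] {ω | T ω = t}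
  set W := fun ω => φ (Y₁ ω, Y₀ ω) - τ (X ω)
  have hm : sigmaX X ≤ ‹MeasurableSpace Ω› := hX.comap_le
  have hWi : Integrable W P := hφi.sub <| (integrable_const C).mono'
    (hτ.comp hX).aestronglyMeasurable (ae_of_all _ fun ω => hτC (X ω))
  have hWm : Measurable fun v : ℝ × ℝ × 𝒳 => φ (v.1, v.2.1) - τ v.2.2 :=
    (hφ.comp (measurable_fst.prodMk measurable_snd.fst)).sub (hτ.comp measurable_snd.snd)
  calc ∫ ω in {ω | T ω = t}, g (X ω) * W ω ∂P
      = ∫ ω, (c * lam ω + (1 - lam ω) * π₀ ω) * (g (X ω) * W ω) ∂P :=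
        setIntegral_treated_eq hX hR hT hY₁ hY₀ hRbin hA1 hA2 hA3 hlam hpi
          (w := fun v => g v.2.2 * (φ (v.1, v.2.1) - τ v.2.2))
          ((hg.comp measurable_snd.snd).mul hWm)
          (hWi.bdd_mul (hg.comp hX).aestronglyMeasurable (ae_of_all _ fun ω => hgB (X ω)))
    _ = ∫ ω, lam ω * W ω ∂P := ?_
    _ = ∫ ω in {ω | R ω = 1}, W ω ∂P :=
        (hA3.setIntegral_preimage hm hR (hY₁.prodMk hY₀) (measurableSet_singleton 1)
          (hWm.comp measurable_outcomes_covariates).stronglyMeasurable hWi).symm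
  rcases hrob with hτ_eq | hbal
  · have hc : c ∈ Icc 0 1 := toReal_cond_apply_mem_Icc P _ _
    have hlam_sm : StronglyMeasurable[sigmaX X] lam := stronglyMeasurable_condExp
    have hK_sm : StronglyMeasurable[sigmaX X]
        fun ω => (c * lam ω + (1 - lam ω) * π₀ ω) * g (X ω) :=
      ((stronglyMeasurable_const.mul hlam_sm).add ((stronglyMeasurable_const.sub hlam_sm).mul
        stronglyMeasurable_condExp)).mul (hg.comp (comap_measurable X)).stronglyMeasurable
    have hK : ∀ᵐ ω ∂P, ‖(c * lam ω + (1 - lam ω) * π₀ ω) * g (X ω)‖ ≤ B := by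
      filter_upwards [hlam, hpi] with ω h1 h2
      have hK1 : c * lam ω + (1 - lam ω) * π₀ ω ∈ Icc 0 1 := by
        constructor <;> nlinarith [h1.1, h1.2, h2.1, h2.2, hc.1, hc.2]
      rw [norm_mul]
      exact (mul_le_of_le_one_left (norm_nonneg _) (norm_le_one_of_mem_Icc hK1)).trans (hgB _)
    calc ∫ ω, (c * lam ω + (1 - lam ω) * π₀ ω) * (g (X ω) * W ω) ∂P
        = ∫ ω, (c * lam ω + (1 - lam ω) * π₀ ω) * g (X ω) * W ω ∂P :=
          integral_congr_ae (ae_of_all _ fun ω => (mul_assoc _ _ _).symm)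
      _ = 0 := integral_mul_sub_eq_zero_of_ae_eq_condExp hm hK_sm hK hφi hτ_eq
      _ = ∫ ω, lam ω * W ω ∂P := (integral_mul_sub_eq_zero_of_ae_eq_condExp hm hlam_sm
          (hlam.mono fun ω h => norm_le_one_of_mem_Icc h) hφi hτ_eq).symm
  · refine integral_congr_ae ?_
    filter_upwards [hbal] with ω h
    linear_combination W ω * h

end Trial

section Score

variable {Ω 𝒳 : Type*} [MeasurableSpace Ω]

def ipwWeight (P : Measure Ω) (R T : Ω → ℝ) (t : ℝ) (lamd πd : 𝒳 → ℝ) (x : 𝒳) : ℝ :=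
  lamd x / (lamd x * (P[|{ω | R ω = 1}] {ω | T ω = t}).toReal + (1 - lamd x) * πd x)

def aipwScore (P : Measure Ω) (X : Ω → 𝒳) (R T Y Y' : Ω → ℝ) (t : ℝ) (lamd πd τd : 𝒳 → ℝ)
    (ω : Ω) : ℝ :=
  (if T ω = t then (1 : ℝ) else 0) * lamd (X ω) * Y ω
      / ((P {ω' | R ω' = 1}).toReal * (lamd (X ω) * (P[|{ω' | R ω' = 1}] {ω' | T ω' = t}).toReal
        + (1 - lamd (X ω)) * πd (X ω)))
    + (R ω - (if T ω = t then (1 : ℝ) else 0) * lamd (X ω)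
        / (lamd (X ω) * (P[|{ω' | R ω' = 1}] {ω' | T ω' = t}).toReal
          + (1 - lamd (X ω)) * πd (X ω))) * τd (X ω) / (P {ω' | R ω' = 1}).toReal
    - (R ω / (P {ω' | R ω' = 1}).toReal) * (∫ ω', Y' ω' ∂P[|{ω'' | R ω'' = 1}])

variable {P : Measure Ω} {X : Ω → 𝒳} {R T : Ω → ℝ} {t : ℝ}

lemma mul_self_le_mix {ε a b c : ℝ} (hε : 0 < ε) (ha : a ∈ Icc ε (1 - ε)) (hb : b ∈ Icc ε (1 - ε))
    (hc : c ∈ Icc 0 1) : ε * ε ≤ a * c + (1 - a) * b := by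
  have h1 : ε * ε ≤ (1 - a) * b := mul_le_mul (by linarith [ha.2]) hb.1 hε.le (by linarith [ha.2])
  nlinarith [mul_nonneg (hε.le.trans ha.1) hc.1]

lemma norm_ipwWeight_le {ε : ℝ} (hε : 0 < ε) {lamd πd : 𝒳 → ℝ} {x : 𝒳}
    (ha : lamd x ∈ Icc ε (1 - ε)) (hb : πd x ∈ Icc ε (1 - ε)) :
    ‖ipwWeight P R T t lamd πd x‖ ≤ 1 / (ε * ε) := by
  have hden := mul_self_le_mix hε ha hb
    (toReal_cond_apply_mem_Icc P {ω | R ω = 1} {ω | T ω = t})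
  rw [ipwWeight,
    Real.norm_of_nonneg (div_nonneg (hε.le.trans ha.1) ((mul_self_nonneg ε).trans hden))]
  exact div_le_div₀ zero_le_one (by linarith [ha.2]) (by positivity) hden

lemma mix_mul_ipwWeight {ε : ℝ} (hε : 0 < ε) {lamd πd : 𝒳 → ℝ} {x : 𝒳}
    (ha : lamd x ∈ Icc ε (1 - ε)) (hb : πd x ∈ Icc ε (1 - ε)) :
    ((P[|{ω | R ω = 1}] {ω | T ω = t}).toReal * lamd x + (1 - lamd x) * πd x)
      * ipwWeight P R T t lamd πd x = lamd x := by
  have hden := mul_self_le_mix hε ha hb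
    (toReal_cond_apply_mem_Icc P {ω | R ω = 1} {ω | T ω = t})
  rw [ipwWeight, mul_comm _ (lamd x),
    mul_div_cancel₀ _ ((mul_self_pos.mpr hε.ne').trans_le hden).ne']

lemma integral_aipwScore_eq_zero_of_balance [IsFiniteMeasure P] (hR : Measurable R)
    (hT : Measurable T) (hRbin : ∀ ω, R ω = 0 ∨ R ω = 1) {Y Y' : Ω → ℝ} (hY' : Integrable Y' P)
    (hcons : ∀ ω, T ω = t → Y ω = Y' ω) {lamd πd τd : 𝒳 → ℝ}
    (hτ : Integrable (fun ω => τd (X ω)) P)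
    (hgW : Integrable (fun ω => ipwWeight P R T t lamd πd (X ω) * (Y' ω - τd (X ω))) P)
    (hbal : ∫ ω in {ω | T ω = t}, ipwWeight P R T t lamd πd (X ω) * (Y' ω - τd (X ω)) ∂P
        = ∫ ω in {ω | R ω = 1}, (Y' ω - τd (X ω)) ∂P) :
    ∫ ω, aipwScore P X R T Y Y' t lamd πd τd ω ∂P = 0 := by
  set ν := ∫ ω, Y' ω ∂P[|{ω | R ω = 1}]
  set S := {ω | T ω = t}
  set A := {ω | R ω = 1}
  set G := fun ω => ipwWeight P R T t lamd πd (X ω) * (Y' ω - τd (X ω))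
  have hS : MeasurableSet S := hT (measurableSet_singleton t)
  have hA : MeasurableSet A := hR (measurableSet_singleton 1)
  have hG : Integrable (S.indicator G) P := hgW.indicator hS
  have hν : Integrable (A.indicator fun ω => Y' ω - ν) P :=
    (hY'.sub (integrable_const ν)).indicator hA
  have hW : Integrable (A.indicator fun ω => Y' ω - τd (X ω)) P := (hY'.sub hτ).indicator hA
  rw [integral_congr_ae (g := fun ω => (P A).toReal⁻¹ * (S.indicator G ω
      + ((A.indicator fun ω => Y' ω - ν) - A.indicator fun ω => Y' ω - τd (X ω)) ω))
      (ae_of_all _ fun ω => ?_)]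
  · rw [integral_const_mul, integral_add hG (hν.sub hW), integral_sub' hν hW, integral_indicator hS,
      integral_indicator hA, integral_indicator hA, hbal, setIntegral_sub_integral_cond hY']
    ring
  by_cases hTt : T ω = t <;> rcases hRbin ω with hRω | hRω <;>
    simp only [aipwScore, ipwWeight, S, A, G, indicator_apply, mem_ofPred_eq, Pi.sub_apply, hTt,
      hRω, hcons, div_mul_eq_div_div_swap, ↓reduceIte, zero_ne_one] <;> ring

end Score

lemma integral_aipwScore_eq_zero {Ω 𝒳 : Type*} [MeasurableSpace Ω] [MeasurableSpace 𝒳]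
    {P : Measure Ω} [IsFiniteMeasure P] {X : Ω → 𝒳} {R T Y₁ Y₀ Y : Ω → ℝ} {t : ℝ}
    (hX : Measurable X) (hR : Measurable R) (hT : Measurable T)
    (hY₁ : Measurable Y₁) (hY₀ : Measurable Y₀) (hRbin : ∀ ω, R ω = 0 ∨ R ω = 1)
    {φ : ℝ × ℝ → ℝ} (hφ : Measurable φ) (hφi : Integrable (fun ω => φ (Y₁ ω, Y₀ ω)) P)
    (hcons : ∀ ω, T ω = t → Y ω = φ (Y₁ ω, Y₀ ω)) {ε : ℝ} (hε : 0 < ε)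
    (hlamX : ∀ᵐ ω ∂P, ε ≤ cprob (sigmaX X) P {ω' | R ω' = 1} ω ∧
      cprob (sigmaX X) P {ω' | R ω' = 1} ω ≤ 1 - ε)
    (hpi0 : ∀ᵐ ω ∂P,
      ε ≤ cprob (sigmaX X) P[|{ω' | R ω' = 0}] {ω' | T ω' = t} ω ∧
      cprob (sigmaX X) P[|{ω' | R ω' = 0}] {ω' | T ω' = t} ω ≤ 1 - ε)
    (hA1 : IndepFun T (fun ω => (Y₁ ω, Y₀ ω, X ω)) P[|{ω | R ω = 1}])
    (hA2 : CondIndepFunGiven (sigmaX X) T (fun ω => (Y₁ ω, Y₀ ω)) P[|{ω | R ω = 0}])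
    (hA3 : CondIndepFunGiven (sigmaX X) R (fun ω => (Y₁ ω, Y₀ ω)) P)
    {lamd πd τd : 𝒳 → ℝ} (hlamdm : Measurable lamd) (hlamdr : ∀ x, lamd x ∈ Icc ε (1 - ε))
    (hπdm : Measurable πd) (hπdr : ∀ x, πd x ∈ Icc ε (1 - ε))
    (hτdm : Measurable τd) {C : ℝ} (hτdC : ∀ x, |τd x| ≤ C)
    (hrob : (fun ω => τd (X ω)) =ᵐ[P] cexp (sigmaX X) P (fun ω => φ (Y₁ ω, Y₀ ω)) ∨
      ((fun ω => lamd (X ω)) =ᵐ[P] cprob (sigmaX X) P {ω' | R ω' = 1} ∧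
        (fun ω => πd (X ω)) =ᵐ[P] cprob (sigmaX X) P[|{ω' | R ω' = 0}] {ω' | T ω' = t})) :
    ∫ ω, aipwScore P X R T Y (fun ω => φ (Y₁ ω, Y₀ ω)) t lamd πd τd ω ∂P = 0 := by
  have hg : Measurable (ipwWeight P R T t lamd πd) :=
    hlamdm.div ((hlamdm.mul_const _).add ((measurable_const.sub hlamdm).mul hπdm))
  have hgB : ∀ x, ‖ipwWeight P R T t lamd πd x‖ ≤ 1 / (ε * ε) :=
    fun x => norm_ipwWeight_le hε (hlamdr x) (hπdr x)
  have hτi : Integrable (fun ω => τd (X ω)) P :=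
    (integrable_const C).mono' (hτdm.comp hX).aestronglyMeasurable (ae_of_all _ fun ω => hτdC (X ω))
  refine integral_aipwScore_eq_zero_of_balance hR hT hRbin hφi hcons hτi
    ((hφi.sub hτi).bdd_mul (hg.comp hX).aestronglyMeasurable (ae_of_all _ fun ω => hgB (X ω)))
    (setIntegral_treated_weighted_eq hX hR hT hY₁ hY₀ hRbin hA1 hA2 hA3
      (hlamX.mono fun ω h => ⟨hε.le.trans h.1, h.2.trans (by linarith)⟩)
      (hpi0.mono fun ω h => ⟨hε.le.trans h.1, h.2.trans (by linarith)⟩)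
      hφ hφi hg hτdm hgB hτdC (hrob.imp_right fun h => ?_))
  filter_upwards [h.1, h.2] with ω h1 h2
  rw [← h1, ← h2]
  exact mix_mul_ipwWeight hε (hlamdr (X ω)) (hπdr (X ω))

theorem stmt16_general
    {Ω 𝒳 : Type*} [MeasurableSpace Ω] [MeasurableSpace 𝒳]
    (P : Measure Ω) [IsProbabilityMeasure P]
    (X : Ω → 𝒳) (R T Y₁ Y₀ Y : Ω → ℝ) (Yt : ℝ → Ω → ℝ)
    (hX : Measurable X) (hR : Measurable R) (hT : Measurable T)
    (hY₁m : Measurable Y₁) (hY₀m : Measurable Y₀)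
    (hRbin : ∀ ω, R ω = 0 ∨ R ω = 1)
    (hY₁2 : MemLp Y₁ 2 P) (hY₀2 : MemLp Y₀ 2 P)
    (hY : Y = fun ω => T ω * Y₁ ω + (1 - T ω) * Y₀ ω)
    (hYt1 : Yt 1 = Y₁) (hYt0 : Yt 0 = Y₀)
    (ε : ℝ) (hε : 0 < ε)
    (hlamX : ∀ᵐ ω ∂P, ε ≤ cprob (sigmaX X) P {ω' | R ω' = 1} ω ∧
      cprob (sigmaX X) P {ω' | R ω' = 1} ω ≤ 1 - ε)
    (hpi : ∀ r ∈ ({0, 1} : Set ℝ), ∀ t ∈ ({0, 1} : Set ℝ), ∀ᵐ ω ∂P,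
      ε ≤ cprob (sigmaX X) (ProbabilityTheory.cond P {ω' | R ω' = r}) {ω' | T ω' = t} ω ∧
      cprob (sigmaX X) (ProbabilityTheory.cond P {ω' | R ω' = r}) {ω' | T ω' = t} ω ≤ 1 - ε)
    (hA1 : IndepFun T (fun ω => (Y₁ ω, Y₀ ω, X ω)) (ProbabilityTheory.cond P {ω | R ω = 1}))
    (hA2 : CondIndepFunGiven (sigmaX X) T (fun ω => (Y₁ ω, Y₀ ω))
      (ProbabilityTheory.cond P {ω | R ω = 0}))
    (hA3 : CondIndepFunGiven (sigmaX X) R (fun ω => (Y₁ ω, Y₀ ω)) P)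
    (t : ℝ) (ht : t = 0 ∨ t = 1)
    (lamd : 𝒳 → ℝ) (hlamdm : Measurable lamd) (hlamdr : ∀ x, lamd x ∈ Set.Icc ε (1 - ε))
    (πd : 𝒳 → ℝ) (hπdm : Measurable πd) (hπdr : ∀ x, πd x ∈ Set.Icc ε (1 - ε))
    (τd : 𝒳 → ℝ) (hτdm : Measurable τd) (hτdb : ∃ C, ∀ x, |τd x| ≤ C)
    (hrob : (fun ω => τd (X ω)) =ᵐ[P] cexp (sigmaX X) P (Yt t) ∨
      ((fun ω => lamd (X ω)) =ᵐ[P] cprob (sigmaX X) P {ω' | R ω' = 1} ∧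
        (fun ω => πd (X ω)) =ᵐ[P] cprob (sigmaX X) (ProbabilityTheory.cond P {ω' | R ω' = 0}) {ω' | T ω' = t}))
    :
    ∫ ω, ((if T ω = t then (1 : ℝ) else 0) * lamd (X ω) * Y ω / ((P {ω' | R ω' = 1}).toReal * (lamd (X ω) * ((ProbabilityTheory.cond P {ω' | R ω' = 1}) {ω' | T ω' = t}).toReal + (1 - lamd (X ω)) * πd (X ω)))
      + (R ω - (if T ω = t then (1 : ℝ) else 0) * lamd (X ω) / (lamd (X ω) * ((ProbabilityTheory.cond P {ω' | R ω' = 1}) {ω' | T ω' = t}).toReal + (1 - lamd (X ω)) * πd (X ω))) * τd (X ω) / (P {ω' | R ω' = 1}).toReal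
      - (R ω / (P {ω' | R ω' = 1}).toReal) * (∫ ω', Yt t ω' ∂(ProbabilityTheory.cond P {ω'' | R ω'' = 1}))) ∂P = 0 := by
  have hpi0 := hpi 0 (by simp) t (by rcases ht with rfl | rfl <;> simp)
  obtain ⟨φ, hφ, hYt, hcons⟩ : ∃ φ : ℝ × ℝ → ℝ, Measurable φ ∧
      Yt t = (fun ω => φ (Y₁ ω, Y₀ ω)) ∧ ∀ ω, T ω = t → Y ω = φ (Y₁ ω, Y₀ ω) := by
    rcases ht with rfl | rfl
    · exact ⟨Prod.snd, measurable_snd, hYt0, fun ω h => by simp [hY, h]⟩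
    · exact ⟨Prod.fst, measurable_fst, hYt1, fun ω h => by simp [hY, h]⟩
  have hφi : Integrable (fun ω => φ (Y₁ ω, Y₀ ω)) P := by
    rw [← hYt]
    rcases ht with rfl | rfl
    · exact hYt0 ▸ hY₀2.integrable one_le_two
    · exact hYt1 ▸ hY₁2.integrable one_le_two
  obtain ⟨C, hC⟩ := hτdb
  rw [hYt] at hrob ⊢
  exact integral_aipwScore_eq_zero hX hR hT hY₁m hY₀m hRbin hφ hφi hcons hε hlamX hpi0 hA1 hA2 hA3
    hlamdm hlamdr hπdm hπdr hτdm hC hrob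

theorem stmt16
    {Ω 𝒳 : Type*} [MeasurableSpace Ω] [MeasurableSpace 𝒳] [StandardBorelSpace 𝒳]
    (P : Measure Ω) [IsProbabilityMeasure P]
    (X : Ω → 𝒳) (R T Y₁ Y₀ Y : Ω → ℝ) (Yt : ℝ → Ω → ℝ)
    (hX : Measurable X) (hR : Measurable R) (hT : Measurable T)
    (hY₁m : Measurable Y₁) (hY₀m : Measurable Y₀)
    (hRbin : ∀ ω, R ω = 0 ∨ R ω = 1) (hTbin : ∀ ω, T ω = 0 ∨ T ω = 1)
    (hY₁2 : MemLp Y₁ 2 P) (hY₀2 : MemLp Y₀ 2 P)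
    (hY : Y = fun ω => T ω * Y₁ ω + (1 - T ω) * Y₀ ω)
    (hYt1 : Yt 1 = Y₁) (hYt0 : Yt 0 = Y₀)
    (ε : ℝ) (hε : 0 < ε)
    (hlam_pos : 0 < P {ω | R ω = 1}) (hlam_lt : P {ω | R ω = 1} < 1)
    (hlamX : ∀ᵐ ω ∂P, ε ≤ cprob (sigmaX X) P {ω' | R ω' = 1} ω ∧
      cprob (sigmaX X) P {ω' | R ω' = 1} ω ≤ 1 - ε)
    (hpi : ∀ r ∈ ({0, 1} : Set ℝ), ∀ t ∈ ({0, 1} : Set ℝ), ∀ᵐ ω ∂P,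
      ε ≤ cprob (sigmaX X) (ProbabilityTheory.cond P {ω' | R ω' = r}) {ω' | T ω' = t} ω ∧
      cprob (sigmaX X) (ProbabilityTheory.cond P {ω' | R ω' = r}) {ω' | T ω' = t} ω ≤ 1 - ε)
    (hA1 : IndepFun T (fun ω => (Y₁ ω, Y₀ ω, X ω)) (ProbabilityTheory.cond P {ω | R ω = 1}))
    (hA2 : CondIndepFunGiven (sigmaX X) T (fun ω => (Y₁ ω, Y₀ ω))
      (ProbabilityTheory.cond P {ω | R ω = 0}))
    (hA3 : CondIndepFunGiven (sigmaX X) R (fun ω => (Y₁ ω, Y₀ ω)) P)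
    (t : ℝ) (ht : t = 0 ∨ t = 1)
    (lamd : 𝒳 → ℝ) (hlamdm : Measurable lamd) (hlamdr : ∀ x, lamd x ∈ Set.Icc ε (1 - ε))
    (πd : 𝒳 → ℝ) (hπdm : Measurable πd) (hπdr : ∀ x, πd x ∈ Set.Icc ε (1 - ε))
    (τd : 𝒳 → ℝ) (hτdm : Measurable τd) (hτdb : ∃ C, ∀ x, |τd x| ≤ C)
    (hrob : (fun ω => τd (X ω)) =ᵐ[P] cexp (sigmaX X) P (Yt t) ∨
      ((fun ω => lamd (X ω)) =ᵐ[P] cprob (sigmaX X) P {ω' | R ω' = 1} ∧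
        (fun ω => πd (X ω)) =ᵐ[P] cprob (sigmaX X) (ProbabilityTheory.cond P {ω' | R ω' = 0}) {ω' | T ω' = t}))
    :
    ∫ ω, ((if T ω = t then (1 : ℝ) else 0) * lamd (X ω) * Y ω / ((P {ω' | R ω' = 1}).toReal * (lamd (X ω) * ((ProbabilityTheory.cond P {ω' | R ω' = 1}) {ω' | T ω' = t}).toReal + (1 - lamd (X ω)) * πd (X ω)))
      + (R ω - (if T ω = t then (1 : ℝ) else 0) * lamd (X ω) / (lamd (X ω) * ((ProbabilityTheory.cond P {ω' | R ω' = 1}) {ω' | T ω' = t}).toReal + (1 - lamd (X ω)) * πd (X ω))) * τd (X ω) / (P {ω' | R ω' = 1}).toReal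
      - (R ω / (P {ω' | R ω' = 1}).toReal) * (∫ ω', Yt t ω' ∂(ProbabilityTheory.cond P {ω'' | R ω'' = 1}))) ∂P = 0 :=
  stmt16_general P X R T Y₁ Y₀ Y Yt hX hR hT hY₁m hY₀m hRbin hY₁2 hY₀2 hY hYt1 hYt0 ε hε hlamX hpi
    hA1 hA2 hA3 t ht lamd hlamdm hlamdr πd hπdm hπdr τd hτdm hτdb hrob
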